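/- Let q ∈ B_n be balanced and let f ∈ B_n be arbitrary. Then the average over GL_n of the squared q-transform coefficients satisfies Σ_{A ∈ GL_n} W_q(f)(A)² = |GL_n| · (2^(2n) − I_f²)/(2^n − 1), where |GL_n| = (2^n−1)(2^n−2)(2^n−4)···(2^n−2^(n−1)). -/

import Mathlib

/-!
Expanding the square gives `∑_A W_q(f)(A)² = ∑_{a,b} (-1)^{f(a)+f(b)} C(a,b)` with
`C(a,b) = ∑_A (-1)^{q(aA)+q(bA)}`. The kernel `C` is invariant under `(a,b) ↦ (aM,bM)` for
`M ∈ GL_n`, and over `𝔽₂` two distinct nonzero vectors are linearly independent, so `GL_n` is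
transitive both on nonzero vectors and on pairs of distinct nonzero vectors: `C` takes a single
value on each of the off-diagonal orbits `(0,b)`, `(a,0)`, `(a,b)`. Since `q` is balanced, every row
of `C` sums to `0`, and `C(a,a) = |GL_n|`; this forces `C(a,b) = -|GL_n|/(2^n-1)` for `a ≠ b`.
-/

open Finset Matrix

/-- Hamming weight of a Boolean function on `𝔽₂ⁿ`. -/
def wt {n : ℕ} (f : (Fin n → ZMod 2) → ZMod 2) : ℕ :=
  (Finset.univ.filter fun a => f a = 1).card

/-- Imbalance `I_f = Σ_a (-1)^{f(a)}`. -/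
def imb {n : ℕ} (f : (Fin n → ZMod 2) → ZMod 2) : ℤ :=
  ∑ a : Fin n → ZMod 2, (-1 : ℤ) ^ (f a).val

/-- q-transform coefficient `W_q(f)(A) = Σ_a (-1)^{f(a)+q(aA)}` (for `A` a matrix;
invertibility is imposed at use sites via `GL`). -/
def Wq {n : ℕ} (q f : (Fin n → ZMod 2) → ZMod 2)
    (A : Matrix (Fin n) (Fin n) (ZMod 2)) : ℤ :=
  ∑ a : Fin n → ZMod 2, (-1 : ℤ) ^ (f a + q (Matrix.vecMul a A)).val

/-- `ρ_q = ⌈ ((2^{2n} - I_q²)/(2^n - 1))^{1/2} ⌉`. -/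
noncomputable def rho {n : ℕ} (q : (Fin n → ZMod 2) → ZMod 2) : ℤ :=
  ⌈Real.sqrt (((2 : ℝ) ^ (2 * n) - (imb q : ℝ) ^ 2) / ((2 : ℝ) ^ n - 1))⌉

/-- `f` is affine: `f(x) = v·x + c`. -/
def IsAffine {n : ℕ} (f : (Fin n → ZMod 2) → ZMod 2) : Prop :=
  ∃ (v : Fin n → ZMod 2) (c : ZMod 2), ∀ x, f x = (∑ i, v i * x i) + c

theorem LinearIndependent.exists_linearEquiv_apply_eq {K V ι : Type*} [Field K]
    [AddCommGroup V] [Module K V] [FiniteDimensional K V] {u v : ι → V}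
    (hu : LinearIndependent K u) (hv : LinearIndependent K v) :
    ∃ g : V ≃ₗ[K] V, ∀ i, g (u i) = v i := by
  obtain ⟨g, hg⟩ := Submodule.exists_linearEquiv_restrict_eq
    ((Module.Basis.span hu).equiv (Module.Basis.span hv) (Equiv.refl ι))
  refine ⟨g, fun i => ?_⟩
  have := hg (Module.Basis.span hu i)
  rw [Module.Basis.equiv_apply, Module.Basis.span_apply, Module.Basis.span_apply] at this
  exact this.symm

theorem linearIndependent_pair_of_zmod_two {V : Type*} [AddCommGroup V] [Module (ZMod 2) V]
    {a b : V} (ha : a ≠ 0) (hb : b ≠ 0) (hab : a ≠ b) : LinearIndependent (ZMod 2) ![a, b] := by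
  refine (LinearIndependent.pair_iff' ha).2 fun c => ?_
  obtain rfl | rfl : c = 0 ∨ c = 1 := by decide +revert
  · simpa using hb.symm
  · simpa using hab

namespace Matrix.GeneralLinearGroup

variable {K m : Type*} [Field K] [Fintype m] [DecidableEq m]

theorem exists_vecMul_eq_linearEquiv (g : (m → K) ≃ₗ[K] (m → K)) :
    ∃ M : GL m K, ∀ x, x ᵥ* M.val = g x := by
  have hvecMul : ∀ x, x ᵥ* (LinearMap.toMatrix' g.toLinearMap)ᵀ = g x := fun x => by
    rw [vecMul_transpose, LinearMap.toMatrix'_mulVec, LinearEquiv.coe_coe]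
  have hunit : IsUnit (LinearMap.toMatrix' g.toLinearMap)ᵀ :=
    vecMul_injective_iff_isUnit.1 fun x y h => g.injective (by simpa only [hvecMul] using h)
  exact ⟨hunit.unit, hvecMul⟩

theorem exists_vecMul_eq_of_linearIndependent {ι : Type*} {u v : ι → m → K}
    (hu : LinearIndependent K u) (hv : LinearIndependent K v) :
    ∃ M : GL m K, ∀ i, u i ᵥ* M.val = v i := by
  obtain ⟨g, hg⟩ := hu.exists_linearEquiv_apply_eq hv
  obtain ⟨M, hM⟩ := exists_vecMul_eq_linearEquiv g
  exact ⟨M, fun i => (hM _).trans (hg i)⟩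

theorem exists_vecMul_eq_of_ne_zero {a b : m → K} (ha : a ≠ 0) (hb : b ≠ 0) :
    ∃ M : GL m K, a ᵥ* M.val = b := by
  obtain ⟨M, hM⟩ := exists_vecMul_eq_of_linearIndependent (u := fun _ : Unit => a)
    (v := fun _ => b) (linearIndependent_unique_iff.2 ha) (linearIndependent_unique_iff.2 hb)
  exact ⟨M, hM ()⟩

theorem sum_comp_vecMul [Fintype K] {R : Type*} [AddCommMonoid R] (A : GL m K)
    (g : (m → K) → R) : ∑ b, g (b ᵥ* A.val) = ∑ c, g c :=
  Fintype.sum_bijective _ ⟨vecMul_injective_of_isUnit A.isUnit,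
    vecMul_surjective_iff_isUnit.2 A.isUnit⟩ _ _ fun _ => rfl

section Correlation

variable [Fintype K] [DecidableEq K] (Q : (m → K) → ℤ)

def correlation (a b : m → K) : ℤ :=
  ∑ A : GL m K, Q (a ᵥ* A.val) * Q (b ᵥ* A.val)

theorem correlation_comm (a b : m → K) : correlation Q a b = correlation Q b a := by
  simp only [correlation, mul_comm]

theorem correlation_vecMul (M : GL m K) (a b : m → K) :
    correlation Q (a ᵥ* M.val) (b ᵥ* M.val) = correlation Q a b := by
  simp only [correlation, vecMul_vecMul]
  exact Fintype.sum_equiv (Equiv.mulLeft M) _ _ fun A => rfl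

theorem correlation_self (hQ : ∀ c, Q c * Q c = 1) (a : m → K) :
    correlation Q a a = Fintype.card (GL m K) := by
  simp [correlation, hQ]

theorem sum_correlation (hQ : ∑ c, Q c = 0) (a : m → K) : ∑ b, correlation Q a b = 0 := by
  simp only [correlation]
  rw [sum_comm]
  refine sum_eq_zero fun A _ => ?_
  rw [← mul_sum, sum_comp_vecMul A Q, hQ, mul_zero]

theorem card_sub_one_mul_correlation_zero_left (hQ₁ : ∀ c, Q c * Q c = 1)
    (hQ₀ : ∑ c, Q c = 0) {b : m → K} (hb : b ≠ 0) :
    (Fintype.card (m → K) - 1 : ℤ) * correlation Q 0 b = -Fintype.card (GL m K) := by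
  have hconst : ∀ c ∈ univ.erase 0, correlation Q 0 c = correlation Q 0 b := by
    intro c hc
    obtain ⟨M, rfl⟩ := exists_vecMul_eq_of_ne_zero hb (ne_of_mem_erase hc)
    rw [← correlation_vecMul Q M 0 b, zero_vecMul]
  have hrow := sum_correlation Q hQ₀ 0
  rw [← add_sum_erase _ _ (mem_univ 0), sum_eq_card_nsmul hconst, correlation_self Q hQ₁,
    card_erase_of_mem (mem_univ _), card_univ, nsmul_eq_mul,
    Nat.cast_pred Fintype.card_pos] at hrow
  linarith

end Correlation

section ZModTwo

variable {Q : (m → ZMod 2) → ℤ} (hQ₁ : ∀ c, Q c * Q c = 1) (hQ₀ : ∑ c, Q c = 0)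
include hQ₁ hQ₀

theorem card_sub_one_mul_correlation_of_ne {a b : m → ZMod 2} (ha : a ≠ 0) (hb : b ≠ 0)
    (hab : a ≠ b) :
    (Fintype.card (m → ZMod 2) - 1 : ℤ) * correlation Q a b = -Fintype.card (GL m (ZMod 2)) := by
  set S := (univ.erase a).erase 0
  have hconst : ∀ c ∈ S, correlation Q a c = correlation Q a b := by
    intro c hc
    obtain ⟨hc0, hca⟩ : c ≠ 0 ∧ c ≠ a :=
      ⟨ne_of_mem_erase hc, ne_of_mem_erase (mem_of_mem_erase hc)⟩
    obtain ⟨M, hM⟩ := exists_vecMul_eq_of_linearIndependent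
      (linearIndependent_pair_of_zmod_two ha hb hab)
      (linearIndependent_pair_of_zmod_two ha hc0 hca.symm)
    have hMa : a ᵥ* M.val = a := by simpa using hM 0
    have hMb : b ᵥ* M.val = c := by simpa using hM 1
    rw [← correlation_vecMul Q M a b, hMa, hMb]
  have hS : S.card + 1 + 1 = Fintype.card (m → ZMod 2) := by
    rw [card_erase_add_one (mem_erase.2 ⟨ha.symm, mem_univ 0⟩), card_erase_add_one (mem_univ a),
      card_univ]
  have hSpos : (S.card : ℤ) ≠ 0 := by
    exact_mod_cast (card_pos.2 ⟨b, mem_erase.2 ⟨hb, mem_erase.2 ⟨hab.symm, mem_univ b⟩⟩⟩).ne'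
  -- row `a` of the kernel: `|GL| + C(0,a) + #S • C(a,b) = 0`, and `C(0,a)` is already known
  have hrow := sum_correlation Q hQ₀ a
  rw [← add_sum_erase _ _ (mem_univ a), ← add_sum_erase _ _ (mem_erase.2 ⟨ha.symm, mem_univ 0⟩),
    sum_eq_card_nsmul hconst, correlation_self Q hQ₁, correlation_comm Q a 0, nsmul_eq_mul] at hrow
  have hzero := card_sub_one_mul_correlation_zero_left Q hQ₁ hQ₀ ha
  rw [← hS] at hzero ⊢
  push_cast at hzero ⊢
  refine mul_left_cancel₀ hSpos ?_
  linear_combination (S.card + 1 : ℤ) * hrow - hzero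

theorem card_sub_one_mul_correlation (a b : m → ZMod 2) :
    (Fintype.card (m → ZMod 2) - 1 : ℤ) * correlation Q a b =
      (if a = b then (Fintype.card (m → ZMod 2) : ℤ) else 0) * Fintype.card (GL m (ZMod 2)) -
        Fintype.card (GL m (ZMod 2)) := by
  by_cases hab : a = b
  · rw [if_pos hab, hab, correlation_self Q hQ₁]
    ring
  rw [if_neg hab, zero_mul, zero_sub]
  by_cases ha : a = 0
  · subst ha
    exact card_sub_one_mul_correlation_zero_left Q hQ₁ hQ₀ (Ne.symm hab)
  by_cases hb : b = 0
  · subst hb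
    rw [correlation_comm]
    exact card_sub_one_mul_correlation_zero_left Q hQ₁ hQ₀ ha
  exact card_sub_one_mul_correlation_of_ne hQ₁ hQ₀ ha hb hab

theorem card_sub_one_mul_sum_sq {F : (m → ZMod 2) → ℤ} (hF : ∀ c, F c * F c = 1) :
    (Fintype.card (m → ZMod 2) - 1 : ℤ) * ∑ A : GL m (ZMod 2), (∑ a, F a * Q (a ᵥ* A.val)) ^ 2 =
      Fintype.card (GL m (ZMod 2)) * (Fintype.card (m → ZMod 2) ^ 2 - (∑ a, F a) ^ 2) := by
  have hexpand : ∑ A : GL m (ZMod 2), (∑ a, F a * Q (a ᵥ* A.val)) ^ 2 =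
      ∑ a, ∑ b, F a * F b * correlation Q a b := by
    simp only [sq, sum_mul_sum, correlation]
    rw [sum_comm]
    refine sum_congr rfl fun a _ => ?_
    rw [sum_comm]
    exact sum_congr rfl fun b _ => by rw [mul_sum]; exact sum_congr rfl fun A _ => by ring
  rw [hexpand, mul_sum]
  simp_rw [mul_sum, mul_left_comm _ (F _ * F _), card_sub_one_mul_correlation hQ₁ hQ₀, mul_sub,
    sum_sub_distrib, ite_mul, zero_mul, mul_ite, mul_zero, sum_ite_eq, mem_univ, if_true, hF,
    sum_const, card_univ, ← sum_mul, ← sum_mul_sum, nsmul_eq_mul]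
  ring

end ZModTwo

end Matrix.GeneralLinearGroup

theorem neg_one_pow_val_add_zmod_two (x y : ZMod 2) :
    (-1 : ℤ) ^ (x + y).val = (-1) ^ x.val * (-1) ^ y.val := by
  decide +revert

theorem imb_eq_two_pow_sub_two_mul_wt {n : ℕ} (f : (Fin n → ZMod 2) → ZMod 2) :
    imb f = 2 ^ n - 2 * wt f := by
  have hsign : ∀ x : ZMod 2, (-1 : ℤ) ^ x.val = 1 - 2 * if x = 1 then 1 else 0 := by decide
  simp only [imb, wt, hsign, sum_sub_distrib, ← mul_sum, sum_boole, sum_const, card_univ]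
  simp

theorem Wq_eq_sum_mul {n : ℕ} (q f : (Fin n → ZMod 2) → ZMod 2)
    (A : Matrix (Fin n) (Fin n) (ZMod 2)) :
    Wq q f A = ∑ a, (-1 : ℤ) ^ (f a).val * (-1) ^ (q (a ᵥ* A)).val := by
  simp only [Wq, neg_one_pow_val_add_zmod_two]

/-- Second-moment identity over `GL_n` for balanced `q`:
`Σ_{A ∈ GL_n} W_q(f)(A)² = |GL_n| · (2^{2n} - I_f²)/(2^n - 1)`, where
`|GL_n| = ∏_{i<n} (2^n - 2^i)`. -/
theorem second_moment (n : ℕ) (hn : 0 < n)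
    (q : (Fin n → ZMod 2) → ZMod 2) (hq : wt q = 2 ^ (n - 1))
    (f : (Fin n → ZMod 2) → ZMod 2) :
    (∑ A : GL (Fin n) (ZMod 2), ((Wq q f A.val : ℝ)) ^ 2) =
        (Nat.card (GL (Fin n) (ZMod 2)) : ℝ) *
          (((2 : ℝ) ^ (2 * n) - (imb f : ℝ) ^ 2) / ((2 : ℝ) ^ n - 1)) ∧
      Nat.card (GL (Fin n) (ZMod 2)) = ∏ i ∈ Finset.range n, (2 ^ n - 2 ^ i) := by
  refine ⟨?_, ?_⟩
  · have hq₀ : imb q = 0 := by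
      rw [imb_eq_two_pow_sub_two_mul_wt, hq, ← mul_pow_sub_one hn.ne']
      push_cast
      ring
    have hsign : ∀ k : ℕ, (-1 : ℤ) ^ k * (-1) ^ k = 1 :=
      fun k => pow_mul_pow_eq_one k (by norm_num)
    have key := GeneralLinearGroup.card_sub_one_mul_sum_sq (Q := fun c => (-1 : ℤ) ^ (q c).val)
      (fun c => hsign _) hq₀ (fun c => hsign (f c).val)
    simp only [← Wq_eq_sum_mul, Fintype.card_fun, ZMod.card, Fintype.card_fin] at key
    have hpos : (1 : ℝ) < 2 ^ n := one_lt_pow₀ one_lt_two hn.ne'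
    rw [Nat.card_eq_fintype_card, mul_div_assoc', eq_div_iff (by linarith), mul_comm, pow_mul']
    exact_mod_cast key
  · rw [card_GL_field, ZMod.card]
    exact Fin.prod_univ_eq_prod_range (fun i => 2 ^ n - 2 ^ i) n
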